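/- arXiv:2511.05607 — 2 statements merged into one kernel-verified Lean document; each statement's English description precedes it below -/
import Mathlib

section
/- For every n ≥ 1, the splitting graph of the star K_{1,n} admits a signed product cordial labeling. -/
/-- Number of vertices with label `s` under labeling `α`. -/
def vCount {V : Type} [Fintype V] [DecidableEq V] (α : V → ℤ) (s : ℤ) : ℕ :=
  (Finset.univ.filter (fun v => α v = s)).card

/-- The induced edge label on an unordered pair. -/
def edgeLabel {V : Type} (α : V → ℤ) : Sym2 V → ℤ :=
  Sym2.lift ⟨fun u v => α u * α v, fun u v => mul_comm _ _⟩

/-- Number of edges of `G` with induced label `s` under vertex labeling `α`. -/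
def eCount {V : Type} [Fintype V] [DecidableEq V] (G : SimpleGraph V)
    [DecidableRel G.Adj] (α : V → ℤ) (s : ℤ) : ℕ :=
  (G.edgeFinset.filter (fun e => edgeLabel α e = s)).card

/-- `G` admits a signed product cordial labeling. -/
def IsSignedProductCordial {V : Type} [Fintype V] [DecidableEq V]
    (G : SimpleGraph V) [DecidableRel G.Adj] : Prop :=
  ∃ α : V → ℤ, (∀ v, α v = 1 ∨ α v = -1) ∧
    ((vCount α 1 : ℤ) - (vCount α (-1) : ℤ)).natAbs ≤ 1 ∧
    ((eCount G α 1 : ℤ) - (eCount G α (-1) : ℤ)).natAbs ≤ 1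

/-- The splitting graph of `G`: for each vertex `v` (the `inl` copy) a new vertex `v'`
(the `inr` copy) adjacent to exactly the neighbors of `v` in `G`. -/
def splt {V : Type} (G : SimpleGraph V) : SimpleGraph (V ⊕ V) where
  Adj x y := match x, y with
    | .inl u, .inl v => G.Adj u v
    | .inl u, .inr v => G.Adj u v
    | .inr u, .inl v => G.Adj u v
    | .inr _, .inr _ => False
  symm := ⟨by rintro (u|u) (v|v) h <;> first | exact G.adj_symm h | exact h.elim⟩
  loopless := ⟨by rintro (u|u) h; exact G.irrefl h; exact h⟩

instance {V : Type} (G : SimpleGraph V) [DecidableRel G.Adj] :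
    DecidableRel (splt G).Adj := fun x y =>
  match x, y with
  | .inl u, .inl v => inferInstanceAs (Decidable (G.Adj u v))
  | .inl u, .inr v => inferInstanceAs (Decidable (G.Adj u v))
  | .inr u, .inl v => inferInstanceAs (Decidable (G.Adj u v))
  | .inr _, .inr _ => inferInstanceAs (Decidable False)

/-- The star graph `K_{1,n}`: apex `0`, pendants `1,…,n`. -/
def starGraph (n : ℕ) : SimpleGraph (Fin (n+1)) where
  Adj i j := (i = 0 ∨ j = 0) ∧ i ≠ j
  symm := ⟨fun _ _ h => ⟨h.1.symm, h.2.symm⟩⟩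
  loopless := ⟨fun _ h => h.2 rfl⟩

instance (n : ℕ) : DecidableRel (starGraph n).Adj := fun i j =>
  inferInstanceAs (Decidable ((i = 0 ∨ j = 0) ∧ i ≠ j))

/-!
Label each vertex `v` of `G` by a sign `σ v` and its copy `v'` by `-σ v`. The vertex labels
then balance automatically, and each edge `uv` of `G` gives the three edges `uv`, `uv'`, `u'v`
of `Splt G`, whose labels add up to `-σ u σ v`. So the edge imbalance of `Splt G` is minus that
of `σ` on `G`. On the star, signs alternating along `0, 1, …, n` give the edge imbalance
`∑_{i=1}^n (-1)^i ∈ {-1, 0}`.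
-/

open scoped Finset

theorem Finset.sum_eq_card_filter_one_sub_card_filter_neg_one {ι : Type*} (s : Finset ι)
    (f : ι → ℤ) (hf : ∀ i ∈ s, f i = 1 ∨ f i = -1) :
    ∑ i ∈ s, f i = (#{i ∈ s | f i = 1} : ℤ) - #{i ∈ s | f i = -1} := by
  have hsplit : ∀ i ∈ s, f i = (if f i = 1 then 1 else 0) - (if f i = -1 then 1 else 0) := by
    intro i hi
    rcases hf i hi with h | h <;> simp [h]
  rw [Finset.sum_congr rfl hsplit, Finset.sum_sub_distrib, Finset.sum_boole, Finset.sum_boole]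

theorem edgeLabel_eq_one_or_eq_neg_one {V : Type} {α : V → ℤ} (hα : ∀ v, α v = 1 ∨ α v = -1)
    (e : Sym2 V) : edgeLabel α e = 1 ∨ edgeLabel α e = -1 := by
  induction e using Sym2.ind with
  | _ u v => rcases hα u with hu | hu <;> rcases hα v with hv | hv <;> simp [edgeLabel, hu, hv]

section Labelings

variable {V : Type} [Fintype V] [DecidableEq V] {α : V → ℤ}

theorem vCount_one_sub_vCount_neg_one (hα : ∀ v, α v = 1 ∨ α v = -1) :
    (vCount α 1 : ℤ) - vCount α (-1) = ∑ v, α v :=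
  (Finset.sum_eq_card_filter_one_sub_card_filter_neg_one _ α fun v _ => hα v).symm

theorem eCount_one_sub_eCount_neg_one (G : SimpleGraph V) [DecidableRel G.Adj]
    (hα : ∀ v, α v = 1 ∨ α v = -1) :
    (eCount G α 1 : ℤ) - eCount G α (-1) = ∑ e ∈ G.edgeFinset, edgeLabel α e :=
  (Finset.sum_eq_card_filter_one_sub_card_filter_neg_one _ _
    fun e _ => edgeLabel_eq_one_or_eq_neg_one hα e).symm

end Labelings

theorem SimpleGraph.two_nsmul_sum_edgeFinset {V M : Type*} [Fintype V] [AddCommMonoid M]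
    (G : SimpleGraph V) [DecidableRel G.Adj] (f : Sym2 V → M) :
    2 • ∑ e ∈ G.edgeFinset, f e = ∑ x, ∑ y, if G.Adj x y then f s(x, y) else 0 := by
  classical
  have hdarts : ∑ d : G.Dart, f d.edge = 2 • ∑ e ∈ G.edgeFinset, f e := by
    rw [← Finset.sum_fiberwise_of_maps_to (g := SimpleGraph.Dart.edge) (t := G.edgeFinset)
      (fun d _ => G.mem_edgeFinset.2 d.edge_mem), Finset.smul_sum]
    refine Finset.sum_congr rfl fun e he => ?_
    rw [Finset.sum_congr rfl fun d hd => congrArg f (Finset.mem_filter.1 hd).2,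
      Finset.sum_const, G.dart_edge_fiber_card e (G.mem_edgeFinset.1 he)]
  rw [← hdarts, ← Fintype.sum_prod_type', ← Finset.sum_filter]
  exact Finset.sum_bij' (fun d _ => (d.fst, d.snd)) (fun xy h => ⟨xy, (Finset.mem_filter.1 h).2⟩)
    (by simp) (by simp) (by simp) (by simp) (by simp [SimpleGraph.Dart.edge])

theorem sum_edgeLabel_splt_elim_neg {V : Type} [Fintype V] [DecidableEq V] (G : SimpleGraph V)
    [DecidableRel G.Adj] (σ : V → ℤ) :
    ∑ e ∈ (splt G).edgeFinset, edgeLabel (Sum.elim σ (-σ)) e =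
      -∑ e ∈ G.edgeFinset, edgeLabel σ e := by
  rw [← smul_right_inj (two_ne_zero (α := ℕ)), smul_neg, SimpleGraph.two_nsmul_sum_edgeFinset,
    SimpleGraph.two_nsmul_sum_edgeFinset]
  simp only [Fintype.sum_sum_type, ← Finset.sum_add_distrib, ← Finset.sum_neg_distrib]
  refine Finset.sum_congr rfl fun u _ => Finset.sum_congr rfl fun v _ => ?_
  simp only [splt, edgeLabel, Sum.elim_inl, Sum.elim_inr, Pi.neg_apply, Sym2.lift_mk]
  by_cases h : G.Adj u v <;> simp [h]

theorem sum_edgeLabel_starGraph (n : ℕ) (σ : Fin (n + 1) → ℤ) :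
    ∑ e ∈ (starGraph n).edgeFinset, edgeLabel σ e = ∑ i : Fin n, σ 0 * σ i.succ := by
  rw [← smul_right_inj (two_ne_zero (α := ℕ)), SimpleGraph.two_nsmul_sum_edgeFinset]
  simp [Fin.sum_univ_succ, starGraph, edgeLabel, Fin.succ_ne_zero, (Fin.succ_ne_zero _).symm,
    Finset.mul_sum, ← Finset.sum_add_distrib, two_mul, mul_comm]

theorem isSignedProductCordial_splt {V : Type} [Fintype V] [DecidableEq V] (G : SimpleGraph V)
    [DecidableRel G.Adj] {σ : V → ℤ} (hσ : ∀ v, σ v = 1 ∨ σ v = -1)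
    (hE : (∑ e ∈ G.edgeFinset, edgeLabel σ e).natAbs ≤ 1) :
    IsSignedProductCordial (splt G) := by
  have hα : ∀ x, Sum.elim σ (-σ) x = 1 ∨ Sum.elim σ (-σ) x = -1 := by
    rintro (v | v) <;> rcases hσ v with h | h <;> simp [h]
  refine ⟨Sum.elim σ (-σ), hα, ?_, ?_⟩
  · simp [vCount_one_sub_vCount_neg_one hα, Fintype.sum_sum_type]
  · rwa [eCount_one_sub_eCount_neg_one _ hα, sum_edgeLabel_splt_elim_neg, Int.natAbs_neg]

theorem splt_star_signedProductCordial_general (n : ℕ) :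
    IsSignedProductCordial (splt (starGraph n)) := by
  refine isSignedProductCordial_splt _ (σ := fun i => (-1) ^ (i : ℕ))
    (fun i => neg_one_pow_eq_or ℤ _) ?_
  rw [sum_edgeLabel_starGraph]
  simp only [Fin.val_zero, Fin.val_succ, pow_zero, one_mul, pow_succ, mul_neg_one,
    Finset.sum_neg_distrib, Int.natAbs_neg]
  rw [Fin.sum_univ_eq_sum_range (fun i => (-1 : ℤ) ^ i), neg_one_geom_sum]
  split_ifs <;> simp

/-- For every `n ≥ 1`, the splitting graph of the star `K_{1,n}`
admits a signed product cordial labeling. -/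
theorem splt_star_signedProductCordial (n : ℕ) (hn : 1 ≤ n) :
    IsSignedProductCordial (splt (starGraph n)) :=
  splt_star_signedProductCordial_general n
end

section
/- For the splitting graph of the star K_{1,n} with n even, under the labeling α(v_i) = (-1)^{i+1} for 1 ≤ i ≤ n, α(v_0) = 1, α(v_i') = -α(v_i), α(v_0') = -1, and induced edge labels α*(uv) = α(u)α(v) on the edge set {v_0v_i} ∪ {v_0v_i'} ∪ {v_0'v_i} (1 ≤ i ≤ n), exactly 3n/2 edges receive label 1 and 3n/2 edges receive label -1. -/
/-- The labeling of the splitting graph of the star: `α(v₀) = 1`, `α(vᵢ) = 1` for `i`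
odd, `-1` for `i` even, and `α` of each new vertex is the negative of the original. -/
def starLabel (n : ℕ) : Fin (n+1) ⊕ Fin (n+1) → ℤ
  | .inl i => if i.val = 0 then 1 else if i.val % 2 = 1 then 1 else -1
  | .inr i => -(if i.val = 0 then 1 else if i.val % 2 = 1 then 1 else -1)

/-! Since `α(v') = -α(v)`, every edge `uv` of `G` with label `ℓ` yields in the splitting graph
the edge `uv` with label `ℓ` and the two cross edges `uv'`, `u'v` with label `-ℓ`; the cross
edges correspond to the darts of `G`, two per edge. For the star, the pendant edge `v₀vᵢ` has
label `α(vᵢ)`, which is `1` for the `n/2` odd `i` and `-1` for the `n/2` even `i`, so each label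
occurs `n/2 + 2 · n/2 = 3n/2` times. -/

open Finset

lemma edgeLabel_map {V W : Type} (α : W → ℤ) (f : V → W) (e : Sym2 V) :
    edgeLabel α (e.map f) = edgeLabel (α ∘ f) e :=
  Sym2.ind (fun _ _ => rfl) e

lemma Fin.card_filter_val (m : ℕ) (p : ℕ → Prop) [DecidablePred p] :
    #{i : Fin m | p i} = #{k ∈ range m | p k} := by
  rw [← Nat.Iio_eq_range, ← Fin.map_valEmbedding_univ, filter_map, card_map]
  rfl

lemma card_filter_range_succ_ne_zero_odd (n : ℕ) :
    #{k ∈ range (n + 1) | k ≠ 0 ∧ k % 2 = 1} = n - n / 2 := by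
  have hpos : #{k ∈ range (n + 1) | k ≠ 0} = n := by
    rw [filter_ne', card_erase_of_mem (by simp), card_range, Nat.add_sub_cancel]
  have hsplit := card_filter_add_card_filter_not (s := {k ∈ range (n + 1) | k ≠ 0}) (2 ∣ ·)
  simp only [filter_filter, Nat.card_multiples', hpos, Nat.two_dvd_ne_zero] at hsplit
  omega

namespace SimpleGraph

variable {V : Type} [Fintype V] [DecidableEq V] (G : SimpleGraph V) [DecidableRel G.Adj]

lemma card_filter_dart_edge (p : Sym2 V → Prop) [DecidablePred p] :
    #{d : G.Dart | p d.edge} = 2 * #{e ∈ G.edgeFinset | p e} := by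
  rw [card_eq_sum_card_fiberwise (f := Dart.edge) (t := {e ∈ G.edgeFinset | p e})
    (fun d hd => by simpa using (mem_filter.1 hd).2)]
  rw [sum_const_nat (m := 2), mul_comm]
  intro e he
  rw [mem_filter, mem_edgeFinset] at he
  rw [filter_filter, ← G.dart_edge_fiber_card e he.1]
  exact congrArg card (filter_congr fun d _ => and_iff_right_of_imp fun h => h ▸ he.2)

lemma edgeFinset_splt :
    (splt G).edgeFinset = G.edgeFinset.map Function.Embedding.inl.sym2Map ∪
      univ.image (fun d : G.Dart => s(.inl d.fst, .inr d.snd)) := by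
  ext e
  induction e using Sym2.ind with
  | _ x y =>
    have exists_dart (u v : V) : (∃ d : G.Dart, d.fst = u ∧ d.snd = v) ↔ G.Adj u v :=
      ⟨fun ⟨d, hu, hv⟩ => hu ▸ hv ▸ d.adj, fun h => ⟨⟨(u, v), h⟩, rfl, rfl⟩⟩
    rw [mem_edgeFinset, mem_edgeSet]
    rcases x with u | u <;> rcases y with v | v <;>
      simp [splt, Sym2.exists, exists_dart, and_or_left, exists_or, G.adj_comm]

theorem eCount_splt (α : V ⊕ V → ℤ) (hα : ∀ v, α (.inr v) = -α (.inl v)) (s : ℤ) :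
    eCount (splt G) α s = eCount G (α ∘ .inl) s + 2 * eCount G (α ∘ .inl) (-s) := by
  have inj : Function.Injective (fun d : G.Dart => s(Sum.inl d.fst, Sum.inr d.snd)) := by
    intro d d' h
    simpa [Sym2.eq_iff, Dart.ext_iff, Prod.ext_iff] using h
  have disj : Disjoint (G.edgeFinset.map Function.Embedding.inl.sym2Map)
      (univ.image (fun d : G.Dart => s(.inl d.fst, .inr d.snd))) := by
    rw [Finset.disjoint_left]
    simp only [mem_map, mem_image, not_exists, not_and]
    rintro _ ⟨e, -, rfl⟩ d -
    induction e using Sym2.ind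
    simp
  unfold eCount
  rw [edgeFinset_splt, filter_union, card_union_of_disjoint (disj.mono (filter_subset _ _)
    (filter_subset _ _)), filter_map, card_map, filter_image, card_image_of_injective _ inj,
    ← card_filter_dart_edge]
  congr 2
  · ext e
    simp [edgeLabel_map]
  · refine filter_congr fun d _ => ?_
    simp [edgeLabel, Dart.edge, hα, neg_eq_iff_eq_neg]

end SimpleGraph

lemma eCount_starGraph (n : ℕ) (β : Fin (n + 1) → ℤ) (s : ℤ) :
    eCount (starGraph n) β s = #{i : Fin (n + 1) | i ≠ 0 ∧ β 0 * β i = s} := by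
  have hedges : (starGraph n).edgeFinset = (univ.erase 0).image (fun i => s(0, i)) := by
    ext e
    induction e using Sym2.ind with
    | _ i j =>
      rw [SimpleGraph.mem_edgeFinset, SimpleGraph.mem_edgeSet]
      simp only [starGraph, mem_image, mem_erase, mem_univ, and_true, Sym2.eq_iff]
      aesop
  unfold eCount
  rw [hedges, filter_image, card_image_of_injective _ (fun i j h => Sym2.congr_right.1 h),
    filter_erase, ← filter_ne', filter_filter]
  simp only [and_comm]
  rfl

section StarLabel

variable (n : ℕ)

lemma card_pendants_starLabel_eq_one :
    #{i : Fin (n + 1) | i ≠ 0 ∧ starLabel n (.inl i) = 1} = n - n / 2 := by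
  rw [← card_filter_range_succ_ne_zero_odd, ← Fin.card_filter_val]
  congr 1
  refine filter_congr fun i _ => ?_
  rw [Ne, ← Fin.val_eq_zero_iff]
  simp only [starLabel]
  grind

lemma card_pendants_starLabel_eq_neg_one :
    #{i : Fin (n + 1) | i ≠ 0 ∧ starLabel n (.inl i) = -1} = n / 2 := by
  rw [← Nat.card_multiples' n 2, ← Fin.card_filter_val]
  congr 1
  refine filter_congr fun i _ => ?_
  rw [Ne, ← Fin.val_eq_zero_iff]
  simp only [starLabel]
  grind

end StarLabel

/-- For `n` even, under the labeling `starLabel`, exactly `3n/2` edges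
of the splitting graph of `K_{1,n}` receive induced label `1` and `3n/2` receive `-1`. -/
theorem splt_star_edge_counts_even (n : ℕ) (hn : n % 2 = 0) :
    eCount (splt (starGraph n)) (starLabel n) 1 = 3 * n / 2 ∧
    eCount (splt (starGraph n)) (starLabel n) (-1) = 3 * n / 2 := by
  have hα : ∀ i, starLabel n (.inr i) = -starLabel n (.inl i) := fun _ => rfl
  have pendant_count (s : ℤ) : eCount (starGraph n) (starLabel n ∘ .inl) s =
      #{i : Fin (n + 1) | i ≠ 0 ∧ starLabel n (.inl i) = s} := by
    rw [eCount_starGraph]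
    simp [starLabel]
  simp only [SimpleGraph.eCount_splt _ _ hα, pendant_count, neg_neg,
    card_pendants_starLabel_eq_one, card_pendants_starLabel_eq_neg_one]
  omega
end
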